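/- arXiv:1612.00544 — 4 statements merged into one kernel-verified Lean document; each statement's English description precedes it below -/
import Mathlib

section
/- Let (M,g) be a compact Riemannian manifold and let Z be the set of maps u in H^1(M, R^2) with zero average, i.e. ∫_M u = 0. Then for every ε > 0, the infimum of the Ginzburg-Landau energy E_ε(u) = ∫_M (1/2)|du|^2 + ε^{-2} W(u) over u ∈ Z is strictly positive; in fact E_ε(u) ≥ min{λ_1(M)/8, W(1/2)/ε^2} · vol(M)/2 for all u ∈ Z, where λ_1(M) is the first nonzero eigenvalue of the Laplacian. -/
open MeasureTheory

section DoubleWell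

variable {E : Type*} [SeminormedAddCommGroup E] {W : E → ℝ}

theorem doubleWell_nonneg
    (hW1 : ∀ z : E, ‖z‖ < 2 → W z = (1 / 4) * (1 - ‖z‖ ^ 2) ^ 2)
    (hW2 : ∀ z : E, 2 ≤ ‖z‖ → 2 ≤ W z) (z : E) : 0 ≤ W z := by
  rcases lt_or_ge ‖z‖ 2 with h | h
  · rw [hW1 z h]
    positivity
  · linarith [hW2 z h]

theorem doubleWell_antitone_norm
    (hW1 : ∀ z : E, ‖z‖ < 2 → W z = (1 / 4) * (1 - ‖z‖ ^ 2) ^ 2)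
    {z w : E} (hzw : ‖z‖ ≤ ‖w‖) (hw : ‖w‖ ≤ 1) : W w ≤ W z := by
  rw [hW1 w (by linarith), hW1 z (by linarith)]
  have hw' : 0 ≤ 1 - ‖w‖ ^ 2 := by nlinarith [norm_nonneg w]
  gcongr

/-- Where `‖z‖ ≥ 1/2` the Poincaré term pays `λ/8`; inside the ball of radius `1/2` the
potential pays at least its value on the sphere of radius `1/2`. -/
theorem min_le_poincare_add_doubleWell
    (hW1 : ∀ z : E, ‖z‖ < 2 → W z = (1 / 4) * (1 - ‖z‖ ^ 2) ^ 2)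
    (hW2 : ∀ z : E, 2 ≤ ‖z‖ → 2 ≤ W z) {lam : ℝ} (hlam : 0 ≤ lam) (ε : ℝ)
    {w₀ : E} (hw₀ : ‖w₀‖ = 1 / 2) (z : E) :
    min (lam / 8) (W w₀ / ε ^ 2) ≤ lam / 2 * ‖z‖ ^ 2 + (ε ^ 2)⁻¹ * W z := by
  rcases lt_or_ge ‖z‖ (1 / 2) with h | h
  · have hW : W w₀ / ε ^ 2 ≤ (ε ^ 2)⁻¹ * W z := by
      rw [div_eq_inv_mul]
      gcongr
      exact doubleWell_antitone_norm hW1 (by linarith) (by linarith)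
    have : 0 ≤ lam / 2 * ‖z‖ ^ 2 := by positivity
    linarith [min_le_right (lam / 8) (W w₀ / ε ^ 2)]
  · have hz2 : 1 / 4 ≤ ‖z‖ ^ 2 := by nlinarith
    have hlam8 : lam / 8 ≤ lam / 2 * ‖z‖ ^ 2 := by nlinarith
    have : 0 ≤ (ε ^ 2)⁻¹ * W z := mul_nonneg (by positivity) (doubleWell_nonneg hW1 hW2 z)
    linarith [min_le_left (lam / 8) (W w₀ / ε ^ 2)]

theorem min_mul_measure_le_energy {M : Type*} [MeasurableSpace M] (μ : Measure M)
    [IsFiniteMeasure μ]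
    (hW1 : ∀ z : E, ‖z‖ < 2 → W z = (1 / 4) * (1 - ‖z‖ ^ 2) ^ 2)
    (hW2 : ∀ z : E, 2 ≤ ‖z‖ → 2 ≤ W z) {lam : ℝ} (hlam : 0 ≤ lam) (ε : ℝ)
    {w₀ : E} (hw₀ : ‖w₀‖ = 1 / 2) (u : M → E) (Du : M → ℝ)
    (hDu_int : Integrable (fun x => Du x ^ 2) μ)
    (hWu_int : Integrable (fun x => W (u x)) μ)
    (hnu_int : Integrable (fun x => ‖u x‖ ^ 2) μ)
    (hPoincare : lam * ∫ x, ‖u x‖ ^ 2 ∂μ ≤ ∫ x, Du x ^ 2 ∂μ) :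
    min (lam / 8) (W w₀ / ε ^ 2) * (μ Set.univ).toReal
      ≤ ∫ x, ((1 / 2) * Du x ^ 2 + (ε ^ 2)⁻¹ * W (u x)) ∂μ := by
  set c := min (lam / 8) (W w₀ / ε ^ 2)
  calc c * (μ Set.univ).toReal = ∫ _, c ∂μ := by
        rw [integral_const, smul_eq_mul, mul_comm, measureReal_def]
    _ ≤ ∫ x, (lam / 2 * ‖u x‖ ^ 2 + (ε ^ 2)⁻¹ * W (u x)) ∂μ :=
        integral_mono (integrable_const c) ((hnu_int.const_mul _).add (hWu_int.const_mul _))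
          fun x => min_le_poincare_add_doubleWell hW1 hW2 hlam ε hw₀ (u x)
    _ = lam / 2 * ∫ x, ‖u x‖ ^ 2 ∂μ + (ε ^ 2)⁻¹ * ∫ x, W (u x) ∂μ := by
        rw [integral_add (hnu_int.const_mul _) (hWu_int.const_mul _),
          integral_const_mul, integral_const_mul]
    _ ≤ (1 / 2) * ∫ x, Du x ^ 2 ∂μ + (ε ^ 2)⁻¹ * ∫ x, W (u x) ∂μ := by linarith
    _ = ∫ x, ((1 / 2) * Du x ^ 2 + (ε ^ 2)⁻¹ * W (u x)) ∂μ := by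
        rw [integral_add (hDu_int.const_mul _) (hWu_int.const_mul _),
          integral_const_mul, integral_const_mul]

end DoubleWell

theorem stmt0_general {M : Type*} [MeasurableSpace M] (μ : Measure M) [IsFiniteMeasure μ]
    (hμpos : μ Set.univ ≠ 0)
    (W : EuclideanSpace ℝ (Fin 2) → ℝ)
    (hW1 : ∀ z : EuclideanSpace ℝ (Fin 2), ‖z‖ < 2 → W z = (1 / 4) * (1 - ‖z‖ ^ 2) ^ 2)
    (hW2 : ∀ z : EuclideanSpace ℝ (Fin 2), 2 ≤ ‖z‖ → 2 ≤ W z)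
    (lam1 : ℝ) (hlam1 : 0 < lam1)
    (ε : ℝ) (hε : 0 < ε)
    (u : M → EuclideanSpace ℝ (Fin 2)) (Du : M → ℝ)
    (hDu_int : Integrable (fun x => Du x ^ 2) μ)
    (hWu_int : Integrable (fun x => W (u x)) μ)
    (hnu_int : Integrable (fun x => ‖u x‖ ^ 2) μ)
    (hPoincare : lam1 * ∫ x, ‖u x‖ ^ 2 ∂μ ≤ ∫ x, Du x ^ 2 ∂μ) :
    min (lam1 / 8) (W (EuclideanSpace.single (0 : Fin 2) ((1 : ℝ) / 2)) / ε ^ 2)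
        * (μ Set.univ).toReal / 2
      ≤ ∫ x, ((1 / 2) * Du x ^ 2 + (ε ^ 2)⁻¹ * W (u x)) ∂μ ∧
    0 < ∫ x, ((1 / 2) * Du x ^ 2 + (ε ^ 2)⁻¹ * W (u x)) ∂μ := by
  set w₀ := EuclideanSpace.single (0 : Fin 2) ((1 : ℝ) / 2)
  have hw₀ : ‖w₀‖ = 1 / 2 := by
    rw [PiLp.norm_single]
    norm_num
  have hWw₀ : W w₀ = 9 / 64 := by
    rw [hW1 w₀ (by rw [hw₀]; norm_num), hw₀]
    norm_num
  have hc : 0 < min (lam1 / 8) (W w₀ / ε ^ 2) :=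
    lt_min (by positivity) (by rw [hWw₀]; positivity)
  have hvol : 0 < (μ Set.univ).toReal := ENNReal.toReal_pos hμpos (measure_ne_top μ _)
  have hbound := min_mul_measure_le_energy μ hW1 hW2 hlam1.le ε hw₀ u Du
    hDu_int hWu_int hnu_int hPoincare
  have hcv := mul_pos hc hvol
  constructor <;> linarith

/-- On a compact Riemannian manifold (abstracted as a finite measure
space of positive total volume), for a map `u : M → ℝ²` of zero average, with `Du`
denoting the pointwise norm `|du|` of its differential and `lam1` the Poincaré
constant, the Ginzburg-Landau energy `E_ε(u) = ∫ (1/2)|du|² + ε⁻² W(u)` is bounded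
below by `min (λ₁/8) (W(1/2)/ε²) · vol(M)/2 > 0`. -/
theorem stmt0 {M : Type*} [MeasurableSpace M] (μ : Measure M) [IsFiniteMeasure μ]
    (hμpos : μ Set.univ ≠ 0)
    (W : EuclideanSpace ℝ (Fin 2) → ℝ)
    (hW1 : ∀ z : EuclideanSpace ℝ (Fin 2), ‖z‖ < 2 → W z = (1 / 4) * (1 - ‖z‖ ^ 2) ^ 2)
    (hW2 : ∀ z : EuclideanSpace ℝ (Fin 2), 2 ≤ ‖z‖ → 2 ≤ W z)
    (lam1 : ℝ) (hlam1 : 0 < lam1)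
    (ε : ℝ) (hε : 0 < ε)
    (u : M → EuclideanSpace ℝ (Fin 2)) (Du : M → ℝ)
    (hu_int : Integrable u μ)
    (hDu_int : Integrable (fun x => Du x ^ 2) μ)
    (hWu_int : Integrable (fun x => W (u x)) μ)
    (hnu_int : Integrable (fun x => ‖u x‖ ^ 2) μ)
    (hPoincare : lam1 * ∫ x, ‖u x‖ ^ 2 ∂μ ≤ ∫ x, Du x ^ 2 ∂μ)
    (hmean : ∫ x, u x ∂μ = 0) :
    min (lam1 / 8) (W (EuclideanSpace.single (0 : Fin 2) ((1 : ℝ) / 2)) / ε ^ 2)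
        * (μ Set.univ).toReal / 2
      ≤ ∫ x, ((1 / 2) * Du x ^ 2 + (ε ^ 2)⁻¹ * W (u x)) ∂μ ∧
    0 < ∫ x, ((1 / 2) * Du x ^ 2 + (ε ^ 2)⁻¹ * W (u x)) ∂μ :=
  stmt0_general μ hμpos W hW1 hW2 lam1 hlam1 ε hε u Du hDu_int hWu_int hnu_int hPoincare
end

section
/- With v_ε(z) = z/max{|z|, ε} on R^2, there exists a constant C (independent of ε and R) such that for all 0 < ε < R, the energy of v_ε on the disk D_R of radius R satisfies E_ε(v_ε, D_R) = ∫_{D_R} e_ε(v_ε) ≤ π log(R/ε) + C. -/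
open MeasureTheory

noncomputable section
open Metric
abbrev E2 := EuclideanSpace ℝ (Fin 2)

/-- The standard degree-one vortex profile `v_ε(z) = z/max{|z|, ε}`. -/
def vortex (ε : ℝ) (z : EuclideanSpace ℝ (Fin 2)) : EuclideanSpace ℝ (Fin 2) :=
  if ‖z‖ ≤ ε then ε⁻¹ • z else ‖z‖⁻¹ • z

/-- The squared Hilbert–Schmidt norm of the differential of a map `ℝ² → ℝ²`. -/
def hsNormSq (v : EuclideanSpace ℝ (Fin 2) → EuclideanSpace ℝ (Fin 2))
    (z : EuclideanSpace ℝ (Fin 2)) : ℝ :=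
  ∑ i : Fin 2, ‖fderiv ℝ v z (EuclideanSpace.single i 1)‖ ^ 2

/-- The Ginzburg-Landau potential `W(z) = (1/4)(1-|z|²)²`. -/
def glW (z : EuclideanSpace ℝ (Fin 2)) : ℝ := (1 / 4) * (1 - ‖z‖ ^ 2) ^ 2

/-- The Ginzburg-Landau energy density `e_ε(v) = (1/2)|dv|² + ε⁻² W(v)`. -/
def glDensity (ε : ℝ) (v : EuclideanSpace ℝ (Fin 2) → EuclideanSpace ℝ (Fin 2))
    (z : EuclideanSpace ℝ (Fin 2)) : ℝ :=
  (1 / 2) * hsNormSq v z + (ε ^ 2)⁻¹ * glW (v z)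

lemma hasFDerivAt_norm' (x : E2) (hx : x ≠ 0) :
    HasFDerivAt (fun y : E2 => ‖y‖) (‖x‖⁻¹ • innerSL ℝ x) x := by
  have hns : (0:ℝ) < ‖x‖ := norm_pos_iff.2 hx
  have h1 : HasFDerivAt (fun y : E2 => ‖y‖ ^ 2) (2 • innerSL ℝ x) x :=
    (hasStrictFDerivAt_norm_sq x).hasFDerivAt
  have h2 : HasDerivAt Real.sqrt (1 / (2 * Real.sqrt (‖x‖ ^ 2))) (‖x‖ ^ 2) :=
    Real.hasDerivAt_sqrt (by positivity)
  have h3 := h2.comp_hasFDerivAt x h1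
  have he : (fun y : E2 => Real.sqrt (‖y‖ ^ 2)) = fun y : E2 => ‖y‖ := by
    funext y; rw [Real.sqrt_sq (norm_nonneg y)]
  rw [show Real.sqrt ∘ (fun y : E2 => ‖y‖ ^ 2) = fun y : E2 => ‖y‖ from funext fun y => Real.sqrt_sq (norm_nonneg y)] at h3
  refine h3.congr_fderiv (Eq.symm ?_)
  rw [Real.sqrt_sq (norm_nonneg x)]
  ext h
  simp only [ContinuousLinearMap.smul_apply, smul_eq_mul, two_smul,
    ContinuousLinearMap.add_apply]
  field_simp
  ring

lemma hasFDerivAt_outer (x : E2) (hx : x ≠ 0) :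
    HasFDerivAt (fun y : E2 => ‖y‖⁻¹ • y)
      ((‖x‖⁻¹ : ℝ) • ContinuousLinearMap.id ℝ E2 +
        ((-(‖x‖ ^ 2)⁻¹) • (‖x‖⁻¹ • innerSL ℝ x)).smulRight x) x := by
  have hinv : HasFDerivAt (fun y : E2 => ‖y‖⁻¹) ((-(‖x‖ ^ 2)⁻¹) • (‖x‖⁻¹ • innerSL ℝ x)) x :=
    (hasDerivAt_inv (norm_ne_zero_iff.2 hx)).comp_hasFDerivAt x (hasFDerivAt_norm' x hx)
  exact hinv.smul (hasFDerivAt_id x)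

lemma fderiv_vortex_outer (ε : ℝ) (x : E2) (hx : ε < ‖x‖) (hε : 0 < ε) :
    fderiv ℝ (vortex ε) x =
      (‖x‖⁻¹ : ℝ) • ContinuousLinearMap.id ℝ E2 +
        ((-(‖x‖ ^ 2)⁻¹) • (‖x‖⁻¹ • innerSL ℝ x)).smulRight x := by
  have hx0 : x ≠ 0 := by intro h; rw [h, norm_zero] at hx; linarith
  have heq : vortex ε =ᶠ[nhds x] fun y : E2 => ‖y‖⁻¹ • y := by
    have hopen : IsOpen {y : E2 | ε < ‖y‖} := isOpen_lt continuous_const continuous_norm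
    filter_upwards [hopen.mem_nhds hx] with y hy
    rw [vortex, if_neg (not_le.2 hy)]
  exact ((hasFDerivAt_outer x hx0).congr_of_eventuallyEq heq).fderiv

lemma sum_sq_coords (x : E2) : ∑ i : Fin 2, (x i) ^ 2 = ‖x‖ ^ 2 := by
  rw [EuclideanSpace.norm_eq, Real.sq_sqrt (by positivity)]
  simp [Real.norm_eq_abs, sq_abs]

lemma inner_single (x : E2) (i : Fin 2) :
    (inner ℝ x (EuclideanSpace.single i 1) : ℝ) = x i := by
  simp [PiLp.inner_apply, EuclideanSpace.single_apply, RCLike.inner_apply]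

lemma hsNormSq_outer (ε : ℝ) (hε : 0 < ε) (x : E2) (hx : ε < ‖x‖) :
    hsNormSq (vortex ε) x = (‖x‖ ^ 2)⁻¹ := by
  have hr : (0:ℝ) < ‖x‖ := hε.trans hx
  have hrne : ‖x‖ ≠ 0 := hr.ne'
  rw [hsNormSq]
  have key : ∀ i : Fin 2, ‖fderiv ℝ (vortex ε) x (EuclideanSpace.single i 1)‖ ^ 2
      = (‖x‖ ^ 2)⁻¹ - ((‖x‖ ^ 2)⁻¹) ^ 2 * (x i) ^ 2 := by
    intro i
    rw [fderiv_vortex_outer ε x hx hε]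
    set e : E2 := EuclideanSpace.single i 1 with he
    have hne : ‖e‖ = 1 := by simp [he, EuclideanSpace.norm_single]
    have happ : ((‖x‖⁻¹ : ℝ) • ContinuousLinearMap.id ℝ E2 +
        ((-(‖x‖ ^ 2)⁻¹) • (‖x‖⁻¹ • innerSL ℝ x)).smulRight x) e
        = (‖x‖⁻¹ : ℝ) • e + ((-(‖x‖ ^ 2)⁻¹) * (‖x‖⁻¹ * (inner ℝ x e : ℝ))) • x := by
      simp only [ContinuousLinearMap.add_apply, ContinuousLinearMap.smul_apply,
        ContinuousLinearMap.coe_id', id_eq, ContinuousLinearMap.smulRight_apply,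
        innerSL_apply_apply, smul_eq_mul]
    rw [happ, norm_add_sq_real]
    have h1 : ‖(‖x‖⁻¹ : ℝ) • e‖ ^ 2 = (‖x‖ ^ 2)⁻¹ := by
      rw [norm_smul, mul_pow, hne, Real.norm_eq_abs, sq_abs]
      simp [pow_two]
    have h2 : (inner ℝ ((‖x‖⁻¹ : ℝ) • e) (((-(‖x‖ ^ 2)⁻¹) * (‖x‖⁻¹ * (inner ℝ x e : ℝ))) • x) : ℝ)
        = ‖x‖⁻¹ * ((-(‖x‖ ^ 2)⁻¹) * (‖x‖⁻¹ * (inner ℝ x e : ℝ))) * (inner ℝ e x : ℝ) := by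
      rw [real_inner_smul_left, real_inner_smul_right]; ring
    have h3 : ‖((-(‖x‖ ^ 2)⁻¹) * (‖x‖⁻¹ * (inner ℝ x e : ℝ))) • x‖ ^ 2
        = ((-(‖x‖ ^ 2)⁻¹) * (‖x‖⁻¹ * (inner ℝ x e : ℝ))) ^ 2 * ‖x‖ ^ 2 := by
      rw [norm_smul, mul_pow, Real.norm_eq_abs, sq_abs]
    have hxe : (inner ℝ x e : ℝ) = x i := by rw [he]; exact inner_single x i
    have hex : (inner ℝ e x : ℝ) = x i := by rw [real_inner_comm]; exact hxe
    rw [h1, h2, h3, hxe, hex]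
    field_simp
    ring
  rw [Finset.sum_congr rfl (fun i _ => key i), Finset.sum_sub_distrib, ← Finset.mul_sum,
    sum_sq_coords]
  simp only [Finset.sum_const, Finset.card_univ, Fintype.card_fin, nsmul_eq_mul]
  field_simp
  ring

lemma hsNormSq_inner (ε : ℝ) (hε : 0 < ε) (x : E2) (hx : ‖x‖ < ε) :
    hsNormSq (vortex ε) x = 2 * (ε ^ 2)⁻¹ := by
  have heq : vortex ε =ᶠ[nhds x] fun y : E2 => (ε⁻¹ : ℝ) • y := by
    have hopen : IsOpen {y : E2 | ‖y‖ < ε} := isOpen_lt continuous_norm continuous_const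
    filter_upwards [hopen.mem_nhds hx] with y hy
    rw [vortex, if_pos (le_of_lt hy)]
  have hd : HasFDerivAt (fun y : E2 => (ε⁻¹ : ℝ) • y)
      ((ε⁻¹ : ℝ) • ContinuousLinearMap.id ℝ E2) x := (hasFDerivAt_id x).const_smul ε⁻¹
  have hfd : fderiv ℝ (vortex ε) x = (ε⁻¹ : ℝ) • ContinuousLinearMap.id ℝ E2 :=
    (hd.congr_of_eventuallyEq heq).fderiv
  rw [hsNormSq]
  have key : ∀ i : Fin 2, ‖fderiv ℝ (vortex ε) x (EuclideanSpace.single i 1)‖ ^ 2 = (ε ^ 2)⁻¹ := by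
    intro i
    rw [hfd]
    simp only [ContinuousLinearMap.smul_apply, ContinuousLinearMap.coe_id', id_eq]
    rw [norm_smul, mul_pow, Real.norm_eq_abs, sq_abs, EuclideanSpace.norm_single, norm_one]
    simp [pow_two]
  rw [Finset.sum_congr rfl (fun i _ => key i)]
  simp only [Finset.sum_const, Finset.card_univ, Fintype.card_fin, nsmul_eq_mul]
  push_cast
  ring

lemma glW_vortex_outer (ε : ℝ) (hε : 0 < ε) (x : E2) (hx : ε < ‖x‖) :
    glW (vortex ε x) = 0 := by
  have hr : (0:ℝ) < ‖x‖ := hε.trans hx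
  rw [vortex, if_neg (not_le.2 hx), glW, norm_smul, Real.norm_eq_abs,
    abs_of_pos (inv_pos.2 hr), inv_mul_cancel₀ hr.ne']
  norm_num

lemma glW_vortex_inner (ε : ℝ) (hε : 0 < ε) (x : E2) (hx : ‖x‖ ≤ ε) :
    glW (vortex ε x) ≤ 1 / 4 := by
  rw [vortex, if_pos hx, glW, norm_smul, Real.norm_eq_abs, abs_of_pos (inv_pos.2 hε)]
  have h1 : 0 ≤ ε⁻¹ * ‖x‖ := by positivity
  have h2 : ε⁻¹ * ‖x‖ ≤ 1 := by
    rw [inv_mul_le_iff₀ hε, mul_one]; exact hx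
  set t := ε⁻¹ * ‖x‖ with ht
  have ht2 : t ^ 2 ≤ 1 := by nlinarith
  nlinarith [sq_nonneg t, mul_nonneg (sq_nonneg t) (sub_nonneg.2 ht2)]

def phi (ε R r : ℝ) : ℝ := if r ≤ ε then (5/4) * (ε ^ 2)⁻¹ else if r ≤ R then (1/2) * (r ^ 2)⁻¹ else 0

lemma phi_nonneg (ε R r : ℝ) : 0 ≤ phi ε R r := by
  rw [phi]
  split_ifs <;> positivity

lemma density_le_phi {ε R : ℝ} (hε : 0 < ε) (x : E2) (hxR : ‖x‖ ≤ R) (hne : ‖x‖ ≠ ε) :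
    glDensity ε (vortex ε) x ≤ phi ε R ‖x‖ := by
  rcases lt_or_gt_of_ne hne with h | h
  · rw [glDensity, hsNormSq_inner ε hε x h, phi, if_pos h.le]
    have hW := glW_vortex_inner ε hε x h.le
    have h2 : (ε ^ 2)⁻¹ * glW (vortex ε x) ≤ (ε ^ 2)⁻¹ * (1/4) :=
      mul_le_mul_of_nonneg_left hW (by positivity)
    linarith
  · rw [glDensity, hsNormSq_outer ε hε x h, glW_vortex_outer ε hε x h, phi,
      if_neg (not_le.2 h), if_pos hxR]
    ring_nf
    exact le_refl _

lemma measurable_phi (ε R : ℝ) : Measurable (phi ε R) := by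
  unfold phi
  exact Measurable.ite measurableSet_Iic measurable_const
    (Measurable.ite measurableSet_Iic (((measurable_id.pow_const 2).inv).const_mul (1/2))
      measurable_const)

lemma integrable_phi_norm {ε R : ℝ} (hε : 0 < ε) (hεR : ε < R) :
    Integrable (fun z : E2 => phi ε R ‖z‖) := by
  have hmeas : AEStronglyMeasurable (fun z : E2 => phi ε R ‖z‖) volume :=
    ((measurable_phi ε R).comp measurable_norm).aestronglyMeasurable
  set M : ℝ := (5/4) * (ε ^ 2)⁻¹ + (1/2) * (ε ^ 2)⁻¹ with hM
  have hint : Integrable ((Metric.closedBall (0:E2) R).indicator fun _ => M) volume := by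
    rw [integrable_indicator_iff measurableSet_closedBall]
    exact integrableOn_const measure_closedBall_lt_top.ne
  refine hint.mono' hmeas (Filter.Eventually.of_forall fun z => ?_)
  rw [Real.norm_eq_abs, abs_of_nonneg (phi_nonneg _ _ _)]
  by_cases hz : ‖z‖ ≤ R
  · rw [Set.indicator_of_mem (mem_closedBall_zero_iff.2 hz)]
    rw [phi]
    split_ifs with h1 h2
    · nlinarith [inv_nonneg.2 (sq_nonneg ε)]
    · have : (ε:ℝ) ^ 2 ≤ ‖z‖ ^ 2 := by nlinarith [norm_nonneg z]
      have h3 : (‖z‖ ^ 2)⁻¹ ≤ (ε ^ 2)⁻¹ := by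
        apply inv_anti₀ (by positivity) this
      nlinarith [inv_nonneg.2 (sq_nonneg ε)]
  · rw [phi, if_neg (by linarith : ¬ ‖z‖ ≤ ε), if_neg hz]
    exact Set.indicator_nonneg (fun _ _ => by positivity) z

lemma integral_phi_line {ε R : ℝ} (hε : 0 < ε) (hεR : ε < R) :
    ∫ y in Set.Ioi (0:ℝ), y * phi ε R y = 5/8 + (1/2) * Real.log (R/ε) := by
  have hR0 : (0:ℝ) < R := hε.trans hεR
  set f : ℝ → ℝ := fun y => y * phi ε R y with hf
  have heq1 : Set.EqOn f (fun y => y * ((5/4) * (ε ^ 2)⁻¹)) (Set.Ioc 0 ε) := by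
    intro y hy; simp only [hf, phi, if_pos hy.2]
  have heq2 : Set.EqOn f (fun y => (1/2) * y⁻¹) (Set.Ioc ε R) := by
    intro y hy
    have hy0 : (0:ℝ) < y := hε.trans hy.1
    simp only [hf, phi, if_neg (not_le.2 hy.1), if_pos hy.2]
    field_simp
  have heq3 : Set.EqOn f (fun _ => (0:ℝ)) (Set.Ioi R) := by
    intro y hy
    have h1 : ¬ y ≤ ε := by simp only [Set.mem_Ioi] at hy; push_neg; linarith
    have h2 : ¬ y ≤ R := by simp only [Set.mem_Ioi] at hy; push_neg; linarith
    simp only [hf, phi, if_neg h1, if_neg h2, mul_zero]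
  have hI1 : IntegrableOn f (Set.Ioc 0 ε) := by
    refine IntegrableOn.congr_fun ?_ heq1.symm measurableSet_Ioc
    exact (continuous_id.mul continuous_const).integrableOn_Ioc
  have hI2 : IntegrableOn f (Set.Ioc ε R) := by
    refine IntegrableOn.congr_fun ?_ heq2.symm measurableSet_Ioc
    refine IntegrableOn.mono_set ?_ Set.Ioc_subset_Icc_self
    apply ContinuousOn.integrableOn_Icc
    refine continuousOn_const.mul (ContinuousOn.inv₀ continuousOn_id fun y hy => ?_)
    exact ne_of_gt (lt_of_lt_of_le hε hy.1)
  have hI3 : IntegrableOn f (Set.Ioi R) := by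
    refine IntegrableOn.congr_fun ?_ heq3.symm measurableSet_Ioi
    exact integrableOn_zero
  have hsplit1 : Set.Ioc (0:ℝ) R ∪ Set.Ioi R = Set.Ioi 0 := Set.Ioc_union_Ioi_eq_Ioi hR0.le
  have hsplit2 : Set.Ioc (0:ℝ) ε ∪ Set.Ioc ε R = Set.Ioc 0 R :=
    Set.Ioc_union_Ioc_eq_Ioc hε.le hεR.le
  have hIOcR : IntegrableOn f (Set.Ioc 0 R) := by
    rw [← hsplit2]; exact hI1.union hI2
  rw [← hsplit1, setIntegral_union (Set.Ioc_disjoint_Ioi le_rfl) measurableSet_Ioi hIOcR hI3,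
    ← hsplit2, setIntegral_union (Set.Ioc_disjoint_Ioc_of_le le_rfl) measurableSet_Ioc hI1 hI2]
  have e3 : ∫ y in Set.Ioi R, f y = 0 := by
    rw [setIntegral_congr_fun measurableSet_Ioi heq3]; simp
  have e1 : ∫ y in Set.Ioc 0 ε, f y = 5/8 := by
    rw [setIntegral_congr_fun measurableSet_Ioc heq1, ← intervalIntegral.integral_of_le hε.le,
      intervalIntegral.integral_mul_const, integral_id]
    field_simp
    ring
  have e2 : ∫ y in Set.Ioc ε R, f y = (1/2) * Real.log (R/ε) := by
    rw [setIntegral_congr_fun measurableSet_Ioc heq2, ← intervalIntegral.integral_of_le hεR.le,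
      intervalIntegral.integral_const_mul, integral_inv_of_pos hε hR0]
  rw [e1, e2, e3]
  ring

lemma volume_unit_ball_E2 : (volume (Metric.ball (0:E2) 1)).toReal = Real.pi := by
  rw [EuclideanSpace.volume_ball]
  have hcard : (Fintype.card (Fin 2)) = 2 := by simp
  rw [hcard]
  have hG : Real.Gamma ((2:ℕ) / 2 + 1) = 1 := by
    norm_num
  rw [hG]
  have : Real.sqrt Real.pi ^ 2 = Real.pi := Real.sq_sqrt Real.pi_nonneg
  rw [this]
  simp [ENNReal.toReal_ofReal Real.pi_nonneg]

lemma integral_phi_norm_eq {ε R : ℝ} (hε : 0 < ε) (hεR : ε < R) :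
    ∫ z : E2, phi ε R ‖z‖ = Real.pi * Real.log (R/ε) + 5/4 * Real.pi := by
  rw [MeasureTheory.integral_fun_norm_addHaar (volume : Measure E2) (phi ε R)]
  have hdim : Module.finrank ℝ E2 = 2 := finrank_euclideanSpace_fin
  rw [hdim, measureReal_def, volume_unit_ball_E2]
  simp only [show (2-1 : ℕ) = 1 from rfl, pow_one, smul_eq_mul]
  rw [integral_phi_line hε hεR]
  simp only [nsmul_eq_mul, smul_eq_mul]
  push_cast
  ring

lemma glDensity_nonneg (ε : ℝ) (v : E2 → E2) (z : E2) : 0 ≤ glDensity ε v z := by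
  rw [glDensity, glW]
  have h1 : 0 ≤ hsNormSq v z := Finset.sum_nonneg fun i _ => sq_nonneg _
  positivity

/-- There is a constant `C`, independent of `ε` and `R`, such that
for all `0 < ε < R` the vortex profile satisfies
`E_ε(v_ε, D_R) = ∫_{D_R} e_ε(v_ε) ≤ π log(R/ε) + C`. -/
theorem stmt6 :
    ∃ C : ℝ, 0 < C ∧ ∀ ε R : ℝ, 0 < ε → ε < R →
      ∫ z in Metric.closedBall (0 : EuclideanSpace ℝ (Fin 2)) R, glDensity ε (vortex ε) z
        ≤ Real.pi * Real.log (R / ε) + C := by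
  refine ⟨5, by norm_num, fun ε R hε hεR => ?_⟩
  have hsph : ∀ᵐ z : E2 ∂volume, ‖z‖ ≠ ε := by
    have hs : volume (Metric.sphere (0:E2) ε) = 0 := Measure.addHaar_sphere volume 0 ε
    rw [ae_iff]
    convert hs using 2
    ext z
    simp [mem_sphere_zero_iff_norm]
  have hle : glDensity ε (vortex ε) ≤ᵐ[volume.restrict (Metric.closedBall (0:E2) R)]
      fun z => phi ε R ‖z‖ := by
    filter_upwards [ae_restrict_of_ae hsph, ae_restrict_mem measurableSet_closedBall] with z hz hzm
    exact density_le_phi hε z (mem_closedBall_zero_iff.1 hzm) hz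
  calc ∫ z in Metric.closedBall (0:E2) R, glDensity ε (vortex ε) z
      ≤ ∫ z in Metric.closedBall (0:E2) R, phi ε R ‖z‖ :=
        integral_mono_of_nonneg (Filter.Eventually.of_forall fun z => glDensity_nonneg ε _ z)
          ((integrable_phi_norm hε hεR).restrict) hle
    _ ≤ ∫ z : E2, phi ε R ‖z‖ :=
        setIntegral_le_integral (integrable_phi_norm hε hεR)
          (Filter.Eventually.of_forall fun z => phi_nonneg ε R ‖z‖)
    _ = Real.pi * Real.log (R/ε) + 5/4 * Real.pi := integral_phi_norm_eq hε hεR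
    _ ≤ Real.pi * Real.log (R/ε) + 5 := by linarith [Real.pi_le_four]
end
end

section
/- Let (M,g) be a compact Riemannian manifold and u_ε a smooth solution of Δu_ε + ε^{-2}(1-|u_ε|^2)u_ε = 0 with |u_ε| ≤ 1. Then the gradient estimate |du_ε|_g^2 ≤ (ε^{-2} + A)(1-|u_ε|^2) holds pointwise on M, where A = A(M,g) := max_M |Ric_g^-| is the maximal norm of the negative part of the Ricci curvature. -/
open MeasureTheory

noncomputable section

/-- An abstract compact Riemannian manifold: a compact measure space together with
the first-order calculus (gradient, Laplacian, divergence, exterior derivative on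
one-forms, codifferential and Hodge Laplacian on two-forms, fiberwise wedge product)
of a compact Riemannian manifold, with tangent vectors, one-forms and two-forms
realized in Euclidean spaces via an isometric embedding.  The fields record the
standard identities (Leibniz rules, integration by parts, the sign of the Laplacian
at an interior maximum, adjointness of `d` and `d*`). -/
structure RiemSetting (M : Type*) [TopologicalSpace M] [CompactSpace M]
    [MeasurableSpace M] where
  dim : ℕ
  N : ℕ
  N2 : ℕ
  vol : Measure M
  vol_finite : IsFiniteMeasure vol
  vol_pos : vol Set.univ ≠ 0
  smooth : (M → ℝ) → Prop
  smoothV : (M → EuclideanSpace ℝ (Fin N)) → Prop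
  smooth2 : (M → EuclideanSpace ℝ (Fin N2)) → Prop
  grad : (M → ℝ) → M → EuclideanSpace ℝ (Fin N)
  lap : (M → ℝ) → M → ℝ
  divg : (M → EuclideanSpace ℝ (Fin N)) → M → ℝ
  dOne : (M → EuclideanSpace ℝ (Fin N)) → M → EuclideanSpace ℝ (Fin N2)
  codiff2 : (M → EuclideanSpace ℝ (Fin N2)) → M → EuclideanSpace ℝ (Fin N)
  hodgeLap2 : (M → EuclideanSpace ℝ (Fin N2)) → M → EuclideanSpace ℝ (Fin N2)
  wedge : EuclideanSpace ℝ (Fin N) → EuclideanSpace ℝ (Fin N) →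
    EuclideanSpace ℝ (Fin N2)
  smooth_const : ∀ c : ℝ, smooth fun _ => c
  smooth_continuous : ∀ f, smooth f → Continuous f
  smooth_add : ∀ f g, smooth f → smooth g → smooth (f + g)
  smooth_mul : ∀ f g, smooth f → smooth g → smooth (f * g)
  smooth_comp : ∀ (F : ℝ → ℝ) f, ContDiff ℝ (⊤ : ℕ∞) F → smooth f → smooth (F ∘ f)
  smooth_lap : ∀ f, smooth f → smooth (lap f)
  smoothV_grad : ∀ f, smooth f → smoothV (grad f)
  smoothV_smul : ∀ (f : M → ℝ) X, smooth f → smoothV X → smoothV fun x => f x • X x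
  smoothV_sub : ∀ X Y, smoothV X → smoothV Y → smoothV fun x => X x - Y x
  grad_const : ∀ (c : ℝ) (x : M), grad (fun _ => c) x = 0
  grad_add : ∀ f g, smooth f → smooth g → ∀ x, grad (f + g) x = grad f x + grad g x
  grad_mul : ∀ f g, smooth f → smooth g → ∀ x,
    grad (f * g) x = f x • grad g x + g x • grad f x
  lap_const : ∀ (c : ℝ) (x : M), lap (fun _ => c) x = 0
  lap_add : ∀ f g, smooth f → smooth g → ∀ x, lap (f + g) x = lap f x + lap g x
  lap_smul : ∀ (c : ℝ) f, smooth f → ∀ x, lap (fun y => c * f y) x = c * lap f x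
  lap_mul : ∀ f g, smooth f → smooth g → ∀ x,
    lap (f * g) x = f x * lap g x + g x * lap f x
      + 2 * (inner ℝ (grad f x) (grad g x) : ℝ)
  lap_ibp : ∀ f g, smooth f → smooth g →
    ∫ x, lap f x * g x ∂vol = -∫ x, (inner ℝ (grad f x) (grad g x) : ℝ) ∂vol
  div_ibp : ∀ X ψ, smoothV X → smooth ψ →
    ∫ x, divg X x * ψ x ∂vol = -∫ x, (inner ℝ (X x) (grad ψ x) : ℝ) ∂vol
  lap_nonpos_at_max : ∀ f x, smooth f → IsMaxOn f Set.univ x → lap f x ≤ 0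
  wedge_add_left : ∀ a b c, wedge (a + b) c = wedge a c + wedge b c
  wedge_smul_left : ∀ (t : ℝ) a b, wedge (t • a) b = t • wedge a b
  wedge_antisymm : ∀ a b, wedge a b = -wedge b a
  wedge_norm : ∀ a b, ‖wedge a b‖ ≤ ‖a‖ * ‖b‖
  d_adjoint : ∀ X ω, smoothV X → smooth2 ω →
    ∫ x, (inner ℝ (dOne X x) (ω x) : ℝ) ∂vol
      = ∫ x, (inner ℝ (X x) (codiff2 ω x) : ℝ) ∂vol

namespace RiemSetting

variable {M : Type*} [TopologicalSpace M] [CompactSpace M] [MeasurableSpace M]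
variable (S : RiemSetting M)

theorem sm_mul' {f g : M → ℝ} (hf : S.smooth f) (hg : S.smooth g) :
    S.smooth (fun x => f x * g x) := S.smooth_mul f g hf hg

theorem sm_add' {f g : M → ℝ} (hf : S.smooth f) (hg : S.smooth g) :
    S.smooth (fun x => f x + g x) := S.smooth_add f g hf hg

theorem sm_cmul' (a : ℝ) {f : M → ℝ} (hf : S.smooth f) :
    S.smooth (fun x => a * f x) := S.smooth_mul (fun _ => a) f (S.smooth_const a) hf

theorem sm_sub' {f g : M → ℝ} (hf : S.smooth f) (hg : S.smooth g) :
    S.smooth (fun x => f x - g x) := by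
  have h : (fun x => f x - g x) = fun x => f x + (-1) * g x := by funext x; ring
  rw [h]; exact S.sm_add' hf (S.sm_cmul' (-1) hg)

theorem normGradSq_eq {f : M → ℝ} (hf : S.smooth f) (x : M) :
    ‖S.grad f x‖ ^ 2 = (1/2) * (S.lap (fun y => f y * f y) x - 2 * (f x * S.lap f x)) := by
  have e : (fun y => f y * f y) = f * f := rfl
  rw [e]
  have h := S.lap_mul f f hf hf x
  rw [real_inner_self_eq_norm_sq] at h
  linarith

theorem sm_normGradSq {f : M → ℝ} (hf : S.smooth f) :
    S.smooth (fun x => ‖S.grad f x‖ ^ 2) := by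
  have e : (fun x => ‖S.grad f x‖ ^ 2)
      = fun x => (1/2) * (S.lap (fun y => f y * f y) x - 2 * (f x * S.lap f x)) :=
    funext fun x => S.normGradSq_eq hf x
  rw [e]
  exact S.sm_cmul' _ (S.sm_sub' (S.smooth_lap _ (S.sm_mul' hf hf))
    (S.sm_cmul' 2 (S.sm_mul' hf (S.smooth_lap f hf))))

theorem grad_cmul' (a : ℝ) {f : M → ℝ} (hf : S.smooth f) (x : M) :
    S.grad (fun y => a * f y) x = a • S.grad f x := by
  have e : (fun y => a * f y) = (fun _ => a) * f := rfl
  rw [e, S.grad_mul (fun _ => a) f (S.smooth_const a) hf x, S.grad_const]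
  simp

theorem grad_cmul_mul (a : ℝ) {f g : M → ℝ} (hf : S.smooth f) (hg : S.smooth g) (x : M) :
    S.grad (fun y => a * (f y * g y)) x = a • (f x • S.grad g x + g x • S.grad f x) := by
  have e : (fun y => a * (f y * g y)) = (fun _ => a) * (f * g) := rfl
  rw [e, S.grad_mul (fun _ => a) (f * g) (S.smooth_const a) (S.smooth_mul f g hf hg) x,
    S.grad_mul f g hf hg x, S.grad_const]
  simp

theorem grad_one_sub {f : M → ℝ} (hf : S.smooth f) (x : M) :
    S.grad (fun y => 1 - f y) x = ((-1 : ℝ)) • S.grad f x := by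
  have e : (fun y => (1:ℝ) - f y) = (fun _ => (1:ℝ)) + (fun _ => (-1:ℝ)) * f := by
    funext y; simp [Pi.add_apply, Pi.mul_apply]; ring
  rw [e, S.grad_add _ _ (S.smooth_const 1) (S.smooth_mul _ f (S.smooth_const (-1)) hf) x,
    S.grad_mul _ f (S.smooth_const (-1)) hf x, S.grad_const, S.grad_const]
  simp

end RiemSetting

set_option maxHeartbeats 1000000 in
/-- On a compact Riemannian manifold whose Ricci curvature
satisfies `Ric ≥ -A` (recorded through the resulting Bochner inequality), every
smooth solution of `Δu + ε⁻²(1-|u|²)u = 0` with `|u| ≤ 1` satisfies the pointwise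
gradient estimate `|du|² ≤ (ε⁻² + A)(1-|u|²)`. -/
theorem stmt11 {M : Type*} [TopologicalSpace M] [CompactSpace M]
    [MeasurableSpace M] (S : RiemSetting M)
    (A : ℝ) (hA : 0 ≤ A)
    (hBochner : ∀ f g, S.smooth f → S.smooth g → ∀ x,
      (inner ℝ (S.grad f x) (S.grad (S.lap f) x) : ℝ)
        + (inner ℝ (S.grad g x) (S.grad (S.lap g) x) : ℝ)
        - A * (‖S.grad f x‖ ^ 2 + ‖S.grad g x‖ ^ 2)
      ≤ (1 / 2) * S.lap (fun y => ‖S.grad f y‖ ^ 2 + ‖S.grad g y‖ ^ 2) x)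
    (ε : ℝ) (hε : 0 < ε)
    (u1 u2 : M → ℝ) (hs1 : S.smooth u1) (hs2 : S.smooth u2)
    (hGL1 : ∀ x, S.lap u1 x = -((ε ^ 2)⁻¹ * (1 - (u1 x ^ 2 + u2 x ^ 2)) * u1 x))
    (hGL2 : ∀ x, S.lap u2 x = -((ε ^ 2)⁻¹ * (1 - (u1 x ^ 2 + u2 x ^ 2)) * u2 x))
    (hmod : ∀ x, u1 x ^ 2 + u2 x ^ 2 ≤ 1) :
    ∀ x, ‖S.grad u1 x‖ ^ 2 + ‖S.grad u2 x‖ ^ 2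
      ≤ ((ε ^ 2)⁻¹ + A) * (1 - (u1 x ^ 2 + u2 x ^ 2)) := by
  intro x
  set c : ℝ := (ε ^ 2)⁻¹ with hcdef
  have hc : 0 < c := by rw [hcdef]; exact inv_pos.mpr (pow_pos hε 2)
  have key : ∀ δ : ℝ, 0 < δ → ∀ z : M,
      ‖S.grad u1 z‖ ^ 2 + ‖S.grad u2 z‖ ^ 2
        ≤ (c + A + δ) * (1 - (u1 z ^ 2 + u2 z ^ 2)) := by
    intro δ hδ
    set Q : M → ℝ := fun y => u1 y * u1 y + u2 y * u2 y with hQ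
    set P : M → ℝ := fun y => 1 - Q y with hPdef
    set E : M → ℝ := fun y => ‖S.grad u1 y‖ ^ 2 + ‖S.grad u2 y‖ ^ 2 with hEdef
    set W : M → ℝ := fun y => E y - (c + A + δ) * P y with hWdef
    have hPy : ∀ y, P y = 1 - (u1 y ^ 2 + u2 y ^ 2) := by
      intro y; simp only [hPdef, hQ]; ring
    have hEy : ∀ y, E y = ‖S.grad u1 y‖ ^ 2 + ‖S.grad u2 y‖ ^ 2 := by
      intro y; simp only [hEdef]
    have hsQ : S.smooth Q := by
      rw [hQ]; exact S.sm_add' (S.sm_mul' hs1 hs1) (S.sm_mul' hs2 hs2)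
    have hsP : S.smooth P := by
      rw [hPdef]; exact S.sm_sub' (S.smooth_const 1) hsQ
    have hsE : S.smooth E := by
      rw [hEdef]; exact S.sm_add' (S.sm_normGradSq hs1) (S.sm_normGradSq hs2)
    have hsW : S.smooth W := by
      rw [hWdef]; exact S.sm_sub' hsE (S.sm_cmul' (c + A + δ) hsP)
    haveI : Nonempty M := ⟨x⟩
    obtain ⟨x0, -, hmax⟩ := isCompact_univ.exists_isMaxOn Set.univ_nonempty
      ((S.smooth_continuous W hsW).continuousOn)
    have hlapW0 : S.lap W x0 ≤ 0 := S.lap_nonpos_at_max W x0 hsW hmax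
    -- the Ginzburg-Landau equation in terms of P
    have hGLf1 : S.lap u1 = fun y => (-c) * (P y * u1 y) := by
      funext y; rw [hGL1 y, hPy y, hcdef]; ring
    have hGLf2 : S.lap u2 = fun y => (-c) * (P y * u2 y) := by
      funext y; rw [hGL2 y, hPy y, hcdef]; ring
    have hL1 : S.lap u1 x0 = (-c) * (P x0 * u1 x0) := by rw [hGLf1]
    have hL2 : S.lap u2 x0 = (-c) * (P x0 * u2 x0) := by rw [hGLf2]
    -- gradients
    have e3 : Q = u1 * u1 + u2 * u2 := hQ
    have hgQ : ∀ y, S.grad Q y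
        = u1 y • S.grad u1 y + u1 y • S.grad u1 y
          + (u2 y • S.grad u2 y + u2 y • S.grad u2 y) := by
      intro y
      rw [e3, S.grad_add (u1 * u1) (u2 * u2) (S.smooth_mul u1 u1 hs1 hs1)
        (S.smooth_mul u2 u2 hs2 hs2) y, S.grad_mul u1 u1 hs1 hs1 y,
        S.grad_mul u2 u2 hs2 hs2 y]
    have hgP : ∀ y, S.grad P y = ((-1 : ℝ)) • S.grad Q y := by
      intro y; rw [hPdef]; exact S.grad_one_sub hsQ y
    have hgl1 : S.grad (S.lap u1) x0
        = (-c) • (P x0 • S.grad u1 x0 + u1 x0 • S.grad P x0) := by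
      rw [hGLf1]; exact S.grad_cmul_mul (-c) hsP hs1 x0
    have hgl2 : S.grad (S.lap u2) x0
        = (-c) • (P x0 • S.grad u2 x0 + u2 x0 • S.grad P x0) := by
      rw [hGLf2]; exact S.grad_cmul_mul (-c) hsP hs2 x0
    have hPx0 : P x0 = 1 - (u1 x0 ^ 2 + u2 x0 ^ 2) := hPy x0
    -- scalarized inner products
    have hi1 : (inner ℝ (S.grad u1 x0) (S.grad (S.lap u1) x0) : ℝ)
        = (-c) * (P x0 * ‖S.grad u1 x0‖ ^ 2)
          + 2 * c * (u1 x0) ^ 2 * ‖S.grad u1 x0‖ ^ 2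
          + 2 * c * (u1 x0 * u2 x0) * (inner ℝ (S.grad u1 x0) (S.grad u2 x0) : ℝ) := by
      rw [hgl1, hgP x0, hgQ x0]
      simp only [inner_add_right, real_inner_smul_right, real_inner_self_eq_norm_sq]
      ring
    have hi2 : (inner ℝ (S.grad u2 x0) (S.grad (S.lap u2) x0) : ℝ)
        = (-c) * (P x0 * ‖S.grad u2 x0‖ ^ 2)
          + 2 * c * (u2 x0) ^ 2 * ‖S.grad u2 x0‖ ^ 2
          + 2 * c * (u1 x0 * u2 x0) * (inner ℝ (S.grad u2 x0) (S.grad u1 x0) : ℝ) := by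
      rw [hgl2, hgP x0, hgQ x0]
      simp only [inner_add_right, real_inner_smul_right, real_inner_self_eq_norm_sq]
      ring
    have hSigma : (inner ℝ (S.grad u1 x0) (S.grad (S.lap u1) x0) : ℝ)
          + (inner ℝ (S.grad u2 x0) (S.grad (S.lap u2) x0) : ℝ)
        = -(c * (1 - (u1 x0 ^ 2 + u2 x0 ^ 2))
              * (‖S.grad u1 x0‖ ^ 2 + ‖S.grad u2 x0‖ ^ 2))
          + 2 * c * ((u1 x0) ^ 2 * ‖S.grad u1 x0‖ ^ 2
            + 2 * (u1 x0 * u2 x0) * (inner ℝ (S.grad u1 x0) (S.grad u2 x0) : ℝ)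
            + (u2 x0) ^ 2 * ‖S.grad u2 x0‖ ^ 2) := by
      rw [hi1, hi2, real_inner_comm (S.grad u2 x0) (S.grad u1 x0), hPx0]
      ring
    -- Laplacian of P at x0
    have hlapQeq : S.lap Q x0 = 2 * (u1 x0 * S.lap u1 x0)
        + 2 * (u2 x0 * S.lap u2 x0) + 2 * E x0 := by
      rw [e3, S.lap_add (u1 * u1) (u2 * u2) (S.smooth_mul u1 u1 hs1 hs1)
        (S.smooth_mul u2 u2 hs2 hs2) x0, S.lap_mul u1 u1 hs1 hs1 x0,
        S.lap_mul u2 u2 hs2 hs2 x0, real_inner_self_eq_norm_sq,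
        real_inner_self_eq_norm_sq, hEy x0]
      ring
    have hlapPeq : S.lap P x0 = -(S.lap Q x0) := by
      have e2 : P = (fun _ => (1:ℝ)) + fun y => (-1) * Q y := by
        funext y; simp only [Pi.add_apply, hPdef]; ring
      have h := S.lap_add (fun _ => (1:ℝ)) (fun y => (-1) * Q y)
        (S.smooth_const 1) (S.sm_cmul' (-1) hsQ) x0
      rw [e2, h, S.lap_const, S.lap_smul (-1) Q hsQ x0]
      ring
    have hlapPval : S.lap P x0
        = 2 * c * (1 - (u1 x0 ^ 2 + u2 x0 ^ 2))
            * (1 - (1 - (u1 x0 ^ 2 + u2 x0 ^ 2)))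
          - 2 * E x0 := by
      rw [hlapPeq, hlapQeq, hL1, hL2, hPx0]; ring
    -- Laplacian of W at x0
    have hlapWeq : S.lap W x0 = S.lap E x0 + (-(c + A + δ)) * S.lap P x0 := by
      have e4 : W = E + fun y => (-(c + A + δ)) * P y := by
        funext y; simp only [Pi.add_apply, hWdef]; ring
      rw [e4, S.lap_add E (fun y => (-(c + A + δ)) * P y) hsE
        (S.sm_cmul' (-(c + A + δ)) hsP) x0, S.lap_smul (-(c + A + δ)) P hsP x0]
    -- Bochner at x0
    have hB := hBochner u1 u2 hs1 hs2 x0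
    rw [← hEdef] at hB
    -- the maximum value is nonpositive
    have hWx0 : W x0 ≤ 0 := by
      by_contra hpos
      push_neg at hpos
      have hWval : W x0 = E x0 - (c + A + δ) * P x0 := by simp only [hWdef]
      rw [hWval, hPx0, hEy x0] at hpos
      rw [hlapWeq, hlapPval, hEy x0] at hlapW0
      -- auxiliary positivity facts
      have hv : (0:ℝ) ≤ (u1 x0) ^ 2 * ‖S.grad u1 x0‖ ^ 2
          + 2 * (u1 x0 * u2 x0) * (inner ℝ (S.grad u1 x0) (S.grad u2 x0) : ℝ)
          + (u2 x0) ^ 2 * ‖S.grad u2 x0‖ ^ 2 := by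
        have h := sq_nonneg ‖u1 x0 • S.grad u1 x0 + u2 x0 • S.grad u2 x0‖
        rw [norm_add_sq_real, real_inner_smul_left, real_inner_smul_right,
          norm_smul, norm_smul] at h
        simp only [Real.norm_eq_abs, mul_pow, sq_abs] at h
        linarith [h]
      have hb0 : (0:ℝ) < c + A + δ := by linarith
      have hs0 : (0:ℝ) ≤ 1 - (u1 x0 ^ 2 + u2 x0 ^ 2) := by linarith [hmod x0]
      have hE0pos : (0:ℝ) < ‖S.grad u1 x0‖ ^ 2 + ‖S.grad u2 x0‖ ^ 2 := by
        linarith [mul_nonneg hb0.le hs0]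
      have hq0 : (0:ℝ) ≤ u1 x0 ^ 2 + u2 x0 ^ 2 := by positivity
      have t1 := mul_nonneg hc.le hv
      have t2 := mul_pos hδ hE0pos
      have t3 := mul_nonneg (mul_nonneg hc.le hq0) hpos.le
      linarith [hlapW0, hB, hSigma, t1, t2, t3]
    -- conclude the key estimate
    intro z
    have hz : W z ≤ W x0 := hmax (Set.mem_univ z)
    have hWz : W z = E z - (c + A + δ) * P z := by simp only [hWdef]
    have := hz.trans hWx0
    rw [hWz, hEy z, hPy z] at this
    linarith
  -- let δ → 0
  by_contra hcon
  push_neg at hcon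
  set a := ‖S.grad u1 x‖ ^ 2 + ‖S.grad u2 x‖ ^ 2 with hadef
  set b := (c + A) * (1 - (u1 x ^ 2 + u2 x ^ 2)) with hbdef
  have hδ0 : 0 < (a - b) / 2 := by linarith
  have hk := key ((a - b) / 2) hδ0 x
  have hprod : 0 ≤ ((a - b) / 2) * (u1 x ^ 2 + u2 x ^ 2) :=
    mul_nonneg hδ0.le (by positivity)
  linarith [hk, hprod]
end
end

section
/- Let u_ε be a Ginzburg-Landau solution on compact M with |u_ε| ≤ 1 and the gradient bound |du_ε|^2 ≤ C/ε^2, and let γ_ε = f(|u_ε|^2)ju_ε with f as above (f(t) = 1/t for t ≥ 3/4). Then dγ_ε is supported in {|u_ε|^2 ≤ 3/4}, satisfies |dγ_ε| ≤ C'/ε^2 pointwise, and if moreover |{|u_ε|^2 ≤ 3/4}| ≤ C''ε^2 then ‖dγ_ε‖_{L^1(M)} ≤ C''' uniformly in ε. -/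
open MeasureTheory

noncomputable section

/-- Let `u_ε` be a Ginzburg-Landau solution on compact `M` with
`|u_ε| ≤ 1` and the gradient bound `|du_ε|² ≤ C/ε²`, and let
`γ_ε = f(|u_ε|²) j u_ε` with `f(t) = 1/t` for `t ≥ 3/4`, via the standard identity
`dγ_ε = f'(|u|²) d|u|² ∧ ju + f(|u|²) dju`.  Then `dγ_ε` is supported in
`{|u_ε|² ≤ 3/4}`, satisfies `|dγ_ε| ≤ C'/ε²` pointwise, and if moreover
`|{|u_ε|² ≤ 3/4}| ≤ C''ε²` then `‖dγ_ε‖_{L¹(M)} ≤ C'''`, uniformly in `ε`. -/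
theorem stmt16 {M : Type*} [TopologicalSpace M] [CompactSpace M]
    [MeasurableSpace M] (S : RiemSetting M)
    (C C'' : ℝ) (hC : 0 < C) (hC'' : 0 < C'') :
    ∃ C' C''' : ℝ, 0 < C' ∧ 0 < C''' ∧
      ∀ (ε : ℝ), 0 < ε → ∀ (u1 u2 : M → ℝ) (f : ℝ → ℝ),
        S.smooth u1 → S.smooth u2 → ContDiff ℝ (⊤ : ℕ∞) f →
        (∀ t, 3 / 4 ≤ t → f t = 1 / t) →
        (∀ t, 0 ≤ t → t ≤ 1 → 1 ≤ f t ∧ f t ≤ 2) →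
        (∀ t, |deriv f t| ≤ 2) →
        (∀ x, u1 x ^ 2 + u2 x ^ 2 ≤ 1) →
        (∀ x, ‖S.grad u1 x‖ ^ 2 + ‖S.grad u2 x‖ ^ 2 ≤ C / ε ^ 2) →
        (∀ x, S.grad (fun y => u1 y ^ 2 + u2 y ^ 2) x
          = (2 * u1 x) • S.grad u1 x + (2 * u2 x) • S.grad u2 x) →
        (∀ x, S.dOne (fun y =>
            f (u1 y ^ 2 + u2 y ^ 2) • (u1 y • S.grad u2 y - u2 y • S.grad u1 y)) x
          = deriv f (u1 x ^ 2 + u2 x ^ 2) •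
              S.wedge (S.grad (fun y => u1 y ^ 2 + u2 y ^ 2) x)
                (u1 x • S.grad u2 x - u2 x • S.grad u1 x)
            + (2 * f (u1 x ^ 2 + u2 x ^ 2)) • S.wedge (S.grad u1 x) (S.grad u2 x)) →
        (∀ x, 3 / 4 < u1 x ^ 2 + u2 x ^ 2 →
          S.dOne (fun y =>
            f (u1 y ^ 2 + u2 y ^ 2) • (u1 y • S.grad u2 y - u2 y • S.grad u1 y)) x = 0) ∧
        (∀ x, ‖S.dOne (fun y =>
            f (u1 y ^ 2 + u2 y ^ 2) • (u1 y • S.grad u2 y - u2 y • S.grad u1 y)) x‖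
          ≤ C' / ε ^ 2) ∧
        (S.vol {x | u1 x ^ 2 + u2 x ^ 2 ≤ 3 / 4} ≤ ENNReal.ofReal (C'' * ε ^ 2) →
          ∫ x, ‖S.dOne (fun y =>
            f (u1 y ^ 2 + u2 y ^ 2) • (u1 y • S.grad u2 y - u2 y • S.grad u1 y)) x‖ ∂S.vol
            ≤ C''') := by
  classical
  refine ⟨10 * C, 10 * C * C'', by positivity, by positivity, ?_⟩
  intro ε hε u1 u2 f hu1 hu2 hf hfval hfbd hfderiv hnorm hgrad hgradρ hform
  -- derived wedge lemmas
  have wsmul_right : ∀ (t : ℝ) a b, S.wedge a (t • b) = t • S.wedge a b := by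
    intro t a b
    rw [S.wedge_antisymm, S.wedge_smul_left, S.wedge_antisymm b a, smul_neg,
      neg_neg]
  have wself : ∀ a, S.wedge a a = 0 := by
    intro a
    have h := S.wedge_antisymm a a
    have h2 : (2 : ℝ) • S.wedge a a = 0 := by
      rw [two_smul]; nth_rewrite 1 [h]; simp
    simpa using (smul_eq_zero.mp h2).resolve_left (by norm_num)
  -- the key scalar form of dγ
  have key : ∀ x, S.dOne (fun y =>
      f (u1 y ^ 2 + u2 y ^ 2) • (u1 y • S.grad u2 y - u2 y • S.grad u1 y)) x
      = (deriv f (u1 x ^ 2 + u2 x ^ 2) * (2 * u1 x ^ 2 + 2 * u2 x ^ 2)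
          + 2 * f (u1 x ^ 2 + u2 x ^ 2)) • S.wedge (S.grad u1 x) (S.grad u2 x) := by
    intro x
    rw [hform x, hgradρ x]
    set g1 := S.grad u1 x
    set g2 := S.grad u2 x
    set a := u1 x
    set b := u2 x
    have hw : S.wedge ((2 * a) • g1 + (2 * b) • g2) (a • g2 - b • g1)
        = (2 * a ^ 2 + 2 * b ^ 2) • S.wedge g1 g2 := by
      rw [S.wedge_add_left, S.wedge_smul_left, S.wedge_smul_left,
        sub_eq_add_neg, ← neg_one_smul ℝ (b • g1)]
      rw [show S.wedge g1 (a • g2 + (-1 : ℝ) • b • g1)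
          = S.wedge g1 (a • g2) + S.wedge g1 ((-1 : ℝ) • b • g1) by
        rw [S.wedge_antisymm, S.wedge_add_left, neg_add,
          ← S.wedge_antisymm, ← S.wedge_antisymm]]
      rw [show S.wedge g2 (a • g2 + (-1 : ℝ) • b • g1)
          = S.wedge g2 (a • g2) + S.wedge g2 ((-1 : ℝ) • b • g1) by
        rw [S.wedge_antisymm, S.wedge_add_left, neg_add,
          ← S.wedge_antisymm, ← S.wedge_antisymm]]
      rw [wsmul_right, wsmul_right, wsmul_right, wsmul_right, wsmul_right,
        wsmul_right, wself, wself, S.wedge_antisymm g2 g1]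
      simp only [smul_zero, smul_neg, neg_neg, neg_one_smul, add_zero, zero_add,
        smul_smul]
      rw [← neg_smul, ← add_smul]
      congr 1
      ring
    rw [hw, smul_smul, ← add_smul]
  have hρnn : ∀ x, (0 : ℝ) ≤ u1 x ^ 2 + u2 x ^ 2 := fun x => by positivity
  -- support property
  have hsupp : ∀ x, 3 / 4 < u1 x ^ 2 + u2 x ^ 2 →
      S.dOne (fun y =>
        f (u1 y ^ 2 + u2 y ^ 2) • (u1 y • S.grad u2 y - u2 y • S.grad u1 y)) x = 0 := by
    intro x hx
    rw [key x]
    set ρ := u1 x ^ 2 + u2 x ^ 2 with hρdef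
    have hρpos : (0 : ℝ) < ρ := by linarith
    have hderiv : deriv f ρ = -(ρ ^ 2)⁻¹ := by
      have hev : f =ᶠ[nhds ρ] fun t => t⁻¹ := by
        filter_upwards [IsOpen.mem_nhds (isOpen_lt continuous_const continuous_id)
          (show (3 / 4 : ℝ) < ρ from hx)] with t ht
        rw [hfval t (le_of_lt ht), one_div]
      rw [hev.deriv_eq, deriv_inv]
    have hfρ : f ρ = 1 / ρ := hfval ρ (le_of_lt hx)
    rw [hderiv, hfρ]
    have : -(ρ ^ 2)⁻¹ * (2 * u1 x ^ 2 + 2 * u2 x ^ 2) + 2 * (1 / ρ) = 0 := by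
      have h2 : 2 * u1 x ^ 2 + 2 * u2 x ^ 2 = 2 * ρ := by rw [hρdef]; ring
      rw [h2]
      field_simp
      ring
    rw [this, zero_smul]
  -- pointwise bound
  have hbd : ∀ x, ‖S.dOne (fun y =>
      f (u1 y ^ 2 + u2 y ^ 2) • (u1 y • S.grad u2 y - u2 y • S.grad u1 y)) x‖
      ≤ 10 * C / ε ^ 2 := by
    intro x
    rw [key x]
    rw [norm_smul]
    set ρ := u1 x ^ 2 + u2 x ^ 2 with hρdef
    have hρ1 : ρ ≤ 1 := hnorm x
    have hρ0 : (0 : ℝ) ≤ ρ := hρnn x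
    obtain ⟨hf1, hf2⟩ := hfbd ρ hρ0 hρ1
    have hd := hfderiv ρ
    have hcoef : |deriv f ρ * (2 * u1 x ^ 2 + 2 * u2 x ^ 2) + 2 * f ρ| ≤ 8 := by
      have h1 : |deriv f ρ * (2 * u1 x ^ 2 + 2 * u2 x ^ 2)| ≤ 4 := by
        rw [abs_mul]
        have h2 : |2 * u1 x ^ 2 + 2 * u2 x ^ 2| ≤ 2 := by
          rw [abs_of_nonneg (by positivity)]; linarith
        calc |deriv f ρ| * |2 * u1 x ^ 2 + 2 * u2 x ^ 2| ≤ 2 * 2 := by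
              apply mul_le_mul hd h2 (abs_nonneg _) (by norm_num)
          _ = 4 := by norm_num
      have h3 : |2 * f ρ| ≤ 4 := by rw [abs_of_nonneg (by linarith)]; linarith
      calc |deriv f ρ * (2 * u1 x ^ 2 + 2 * u2 x ^ 2) + 2 * f ρ|
          ≤ |deriv f ρ * (2 * u1 x ^ 2 + 2 * u2 x ^ 2)| + |2 * f ρ| := abs_add_le _ _
        _ ≤ 8 := by linarith
    have hwn : ‖S.wedge (S.grad u1 x) (S.grad u2 x)‖ ≤ C / ε ^ 2 / 2 := by
      have h := S.wedge_norm (S.grad u1 x) (S.grad u2 x)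
      have hg := hgrad x
      nlinarith [norm_nonneg (S.grad u1 x), norm_nonneg (S.grad u2 x),
        sq_nonneg (‖S.grad u1 x‖ - ‖S.grad u2 x‖)]
    have hε2 : (0 : ℝ) < ε ^ 2 := by positivity
    calc ‖(deriv f ρ * (2 * u1 x ^ 2 + 2 * u2 x ^ 2) + 2 * f ρ)‖
          * ‖S.wedge (S.grad u1 x) (S.grad u2 x)‖
        ≤ 8 * (C / ε ^ 2 / 2) := by
          apply mul_le_mul hcoef hwn (norm_nonneg _) (by norm_num)
      _ = 4 * C / ε ^ 2 := by ring
      _ ≤ 10 * C / ε ^ 2 := by gcongr <;> linarith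
  refine ⟨hsupp, hbd, ?_⟩
  -- L¹ bound
  intro hvol
  set g : M → ℝ := fun x => ‖S.dOne (fun y =>
    f (u1 y ^ 2 + u2 y ^ 2) • (u1 y • S.grad u2 y - u2 y • S.grad u1 y)) x‖ with hg
  set A : Set M := {x | u1 x ^ 2 + u2 x ^ 2 ≤ 3 / 4} with hA
  have hgnn : ∀ x, 0 ≤ g x := fun x => norm_nonneg _
  have hgle : ∀ x, ENNReal.ofReal (g x)
      ≤ A.indicator (fun _ => ENNReal.ofReal (10 * C / ε ^ 2)) x := by
    intro x
    by_cases hx : x ∈ A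
    · rw [Set.indicator_of_mem hx]
      exact ENNReal.ofReal_le_ofReal (hbd x)
    · rw [Set.indicator_of_notMem hx]
      have hx' : 3 / 4 < u1 x ^ 2 + u2 x ^ 2 := lt_of_not_ge hx
      simp [hg, hsupp x hx']
  by_cases hint : Integrable g S.vol
  · have h1 : ∫ x, g x ∂S.vol = (∫⁻ x, ENNReal.ofReal (g x) ∂S.vol).toReal := by
      rw [integral_eq_lintegral_of_nonneg_ae (Filter.Eventually.of_forall hgnn)
        hint.aestronglyMeasurable]
    rw [h1]
    have h2 : ∫⁻ x, ENNReal.ofReal (g x) ∂S.vol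
        ≤ ENNReal.ofReal (10 * C / ε ^ 2) * S.vol A :=
      le_trans (lintegral_mono hgle) (lintegral_indicator_const_le A _)
    have h3 : ∫⁻ x, ENNReal.ofReal (g x) ∂S.vol
        ≤ ENNReal.ofReal (10 * C / ε ^ 2) * ENNReal.ofReal (C'' * ε ^ 2) :=
      le_trans h2 (mul_le_mul_right hvol _)
    rw [← ENNReal.ofReal_mul (by positivity)] at h3
    calc (∫⁻ x, ENNReal.ofReal (g x) ∂S.vol).toReal
        ≤ (ENNReal.ofReal (10 * C / ε ^ 2 * (C'' * ε ^ 2))).toReal :=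
          ENNReal.toReal_mono ENNReal.ofReal_ne_top h3
      _ = 10 * C / ε ^ 2 * (C'' * ε ^ 2) := ENNReal.toReal_ofReal (by positivity)
      _ = 10 * C * C'' := by field_simp
  · rw [integral_undef hint]
    positivity
end
end
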